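/- arXiv:2510.09240 — 5 statements merged into one kernel-verified Lean document; each statement's English description precedes it below -/
import Mathlib

section
/- The Shapley values computed with a valuation function v' and with its dual valuation function v are identical: φ_i(v) = φ_i(v') for all players i, where v(C) = v'(N) − v'(N \ C). -/
open Finset

variable {α : Type*} [DecidableEq α]

/-- Shapley value of player `i` in the game `v` restricted to the player set `M`. -/
noncomputable def shapleyOn (M : Finset α) (v : Finset α → ℝ) (i : α) : ℝ :=
  ∑ C ∈ (M.erase i).powerset,
    ((Nat.factorial C.card * Nat.factorial (M.card - C.card - 1) : ℝ) /
      (Nat.factorial M.card : ℝ)) * (v (insert i C) - v C)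

/-- Shapley value of player `i` in the game `v` on the full player set. -/
noncomputable def shapley [Fintype α] (v : Finset α → ℝ) (i : α) : ℝ :=
  shapleyOn Finset.univ v i

theorem shapley_dual_eq [Fintype α] (v' : Finset α → ℝ) (i : α) :
    shapley (fun C => v' Finset.univ - v' (Finset.univ \ C)) i = shapley v' i := by
  unfold shapley shapleyOn
  refine Finset.sum_nbij' (fun C => (Finset.univ.erase i) \ C)
    (fun C => (Finset.univ.erase i) \ C) ?_ ?_ ?_ ?_ ?_
  · intro C hC
    simp [Finset.mem_powerset]
  · intro C hC
    simp [Finset.mem_powerset]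
  · intro C hC
    simp only [Finset.mem_powerset] at hC
    exact Finset.sdiff_sdiff_eq_self hC
  · intro C hC
    simp only [Finset.mem_powerset] at hC
    exact Finset.sdiff_sdiff_eq_self hC
  · intro C hC
    simp only [Finset.mem_powerset] at hC
    have hiC : i ∉ C := fun h => (Finset.mem_erase.mp (hC h)).1 rfl
    set D := (Finset.univ.erase i) \ C with hD
    have hiD : i ∉ D := fun h => (Finset.mem_erase.mp (Finset.mem_sdiff.mp h).1).1 rfl
    have h1 : Finset.univ \ C = insert i D := by
      have : (Finset.univ : Finset α) = insert i (Finset.univ.erase i) :=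
        (Finset.insert_erase (Finset.mem_univ i)).symm
      rw [this, Finset.insert_sdiff_of_notMem _ hiC]
    have h2 : Finset.univ \ insert i C = D := by
      rw [Finset.sdiff_insert, h1, Finset.erase_insert hiD]
    have hcard : D.card = (Finset.univ.erase i).card - C.card :=
      Finset.card_sdiff_of_subset hC
    have hle : C.card ≤ (Finset.univ.erase i).card := Finset.card_le_card hC
    have hm : (Finset.univ : Finset α).card = (Finset.univ.erase i).card + 1 := by
      rw [Finset.card_erase_of_mem (Finset.mem_univ i)]
      have : 0 < (Finset.univ : Finset α).card :=
        Finset.card_pos.mpr ⟨i, Finset.mem_univ i⟩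
      omega
    have hcoef : ((Nat.factorial C.card * Nat.factorial
        ((Finset.univ : Finset α).card - C.card - 1) : ℝ) /
        (Nat.factorial (Finset.univ : Finset α).card : ℝ))
        = ((Nat.factorial D.card * Nat.factorial
        ((Finset.univ : Finset α).card - D.card - 1) : ℝ) /
        (Nat.factorial (Finset.univ : Finset α).card : ℝ)) := by
      have e1 : (Finset.univ : Finset α).card - C.card - 1
          = D.card := by omega
      have e2 : (Finset.univ : Finset α).card - D.card - 1 = C.card := by omega
      rw [e1, e2, mul_comm]
    rw [hcoef]
    simp only [h1, h2]
    ring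
end

section
/- The Shapley value satisfies the strict desirability property: if for all C ⊆ N \ {i,j} we have v(C ∪ {i}) ≥ v(C ∪ {j}), and there exists B ⊆ N \ {i,j} with v(B ∪ {i}) > v(B ∪ {j}), then φ_i(v) > φ_j(v). -/
open Finset

variable {α : Type*} [DecidableEq α]

/-- Auxiliary weight function. -/
noncomputable def shapW (n k : ℕ) : ℝ :=
  (Nat.factorial k * Nat.factorial (n - k - 1) : ℝ) / (Nat.factorial n : ℝ)

lemma shapW_pos (n k : ℕ) : 0 < shapW n k := by
  unfold shapW
  apply div_pos
  · exact mul_pos (by exact_mod_cast Nat.factorial_pos k)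
      (by exact_mod_cast Nat.factorial_pos _)
  · exact_mod_cast Nat.factorial_pos n

lemma shapley_split [Fintype α] (v : Finset α → ℝ) (a b : α) (hab : a ≠ b) :
    shapley v a
      = ∑ D ∈ (((univ : Finset α).erase a).erase b).powerset,
          shapW (univ : Finset α).card D.card * (v (insert a D) - v D)
        + ∑ D ∈ (((univ : Finset α).erase a).erase b).powerset,
          shapW (univ : Finset α).card (D.card + 1) *
            (v (insert a (insert b D)) - v (insert b D)) := by
  set S : Finset α := ((univ : Finset α).erase a).erase b with hSdef
  have hbS : b ∉ S := Finset.notMem_erase _ _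
  have h1 : insert b S = (univ : Finset α).erase a :=
    Finset.insert_erase (Finset.mem_erase.mpr ⟨hab.symm, Finset.mem_univ b⟩)
  have hform : shapley v a
      = ∑ C ∈ ((univ : Finset α).erase a).powerset,
          shapW (univ : Finset α).card C.card * (v (insert a C) - v C) := rfl
  rw [hform, ← h1, Finset.sum_powerset_insert hbS]
  congr 1
  refine Finset.sum_congr rfl fun D hD => ?_
  have hbD : b ∉ D := fun h => hbS (Finset.mem_powerset.mp hD h)
  rw [Finset.card_insert_of_notMem hbD]

theorem shapley_strict_desirability [Fintype α] (v : Finset α → ℝ)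
    (hv0 : v ∅ = 0) (i j : α) (hij : i ≠ j)
    (hge : ∀ C : Finset α, C ⊆ Finset.univ \ ({i, j} : Finset α) →
      v (insert j C) ≤ v (insert i C))
    (hgt : ∃ B : Finset α, B ⊆ Finset.univ \ ({i, j} : Finset α) ∧
      v (insert j B) < v (insert i B)) :
    shapley v j < shapley v i := by
  classical
  obtain ⟨B, hBsub, hBlt⟩ := hgt
  set S : Finset α := ((univ : Finset α).erase i).erase j with hSdef
  have hSeq : S = (univ : Finset α) \ ({i, j} : Finset α) := by
    ext x
    simp only [hSdef, Finset.mem_erase, Finset.mem_sdiff, Finset.mem_univ, true_and,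
      Finset.mem_insert, Finset.mem_singleton, not_or]
    tauto
  have hS' : ((univ : Finset α).erase j).erase i = S := by
    rw [hSdef, Finset.erase_right_comm]
  have hi := shapley_split v i j hij
  have hj := shapley_split v j i hij.symm
  rw [hS'] at hj
  set n := (univ : Finset α).card with hn
  have key : shapley v i - shapley v j
      = ∑ D ∈ S.powerset,
          (shapW n D.card + shapW n (D.card + 1)) * (v (insert i D) - v (insert j D)) := by
    rw [hi, hj, ← Finset.sum_add_distrib, ← Finset.sum_add_distrib, ← Finset.sum_sub_distrib]
    refine Finset.sum_congr rfl fun D hD => ?_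
    rw [Finset.insert_comm j i D]
    ring
  have hpos : 0 < ∑ D ∈ S.powerset,
      (shapW n D.card + shapW n (D.card + 1)) * (v (insert i D) - v (insert j D)) := by
    refine Finset.sum_pos' (fun D hD => ?_) ⟨B, ?_, ?_⟩
    · have hD' : D ⊆ univ \ ({i, j} : Finset α) := hSeq ▸ Finset.mem_powerset.mp hD
      have h1 := hge D hD'
      have h2 := add_pos (shapW_pos n D.card) (shapW_pos n (D.card + 1))
      nlinarith
    · rw [Finset.mem_powerset, hSeq]; exact hBsub
    · have h2 := add_pos (shapW_pos n B.card) (shapW_pos n (B.card + 1))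
      nlinarith
  linarith
end

section
/- The time-aware cumulative reward satisfies time-based monotonicity: if party i's joining time decreases from t_i to t_i' < t_i while all other joining times are unchanged, then the new reward r_i' satisfies r_i' ≥ r_i, where rewards are r_i = Σ_{τ=0}^{T} w^(τ) φ_i^(τ) with φ_i^(τ) = v({i}) before i joins and the Shapley value of i in the restricted game afterwards. -/
open Finset

variable {α : Type*} [DecidableEq α]

/-- `φ_i^(τ)`: party `i`'s Shapley value at time `τ`, namely the Shapley value of `i`
in the game restricted to the parties who joined by time `τ` if `i` has joined,
and `v {i}` otherwise. -/
noncomputable def phiTime [Fintype α] (v : Finset α → ℝ) (t : α → ℕ) (i : α) (τ : ℕ) : ℝ :=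
  if t i ≤ τ then shapleyOn (Finset.univ.filter (fun k => t k ≤ τ)) v i else v {i}

/-- Time-aware cumulative reward `r_i = Σ_{τ=0}^{T} w^(τ) φ_i^(τ)` with
`w^(τ) = β^τ / Σ_{s=0}^T β^s` and `T = max_k t_k`. -/
noncomputable def reward [Fintype α] (v : Finset α → ℝ) (t : α → ℕ) (β : ℝ) (i : α) : ℝ :=
  ∑ τ ∈ Finset.range (Finset.univ.sup t + 1),
    (β ^ τ / ∑ s ∈ Finset.range (Finset.univ.sup t + 1), β ^ s) * phiTime v t i τ

/-- The Shapley weights over subsets of `s` (for a game on `s ∪ {i}`) sum to `1`. -/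
lemma shapley_weight_sum (s : Finset α) :
    ∑ C ∈ s.powerset,
      ((Nat.factorial C.card * Nat.factorial (s.card - C.card) : ℝ) /
        (Nat.factorial (s.card + 1) : ℝ)) = 1 := by
  rw [Finset.sum_powerset s (fun C =>
      ((Nat.factorial C.card * Nat.factorial (s.card - C.card) : ℝ) /
        (Nat.factorial (s.card + 1) : ℝ)))]
  have h : ∀ j ∈ Finset.range (s.card + 1),
      (∑ C ∈ Finset.powersetCard j s,
        ((Nat.factorial C.card * Nat.factorial (s.card - C.card) : ℝ) /
          (Nat.factorial (s.card + 1) : ℝ)))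
      = (1 : ℝ) / (s.card + 1) := by
    intro j hj
    rw [Finset.mem_range] at hj
    have hjle : j ≤ s.card := Nat.lt_succ_iff.mp hj
    have := Finset.sum_powersetCard j s (fun c =>
      ((Nat.factorial c * Nat.factorial (s.card - c) : ℝ) /
        (Nat.factorial (s.card + 1) : ℝ)))
    rw [this]
    have hfac : (s.card.choose j : ℝ) * (Nat.factorial j * Nat.factorial (s.card - j)) =
        Nat.factorial s.card := by
      rw [← mul_assoc]
      exact_mod_cast congrArg (Nat.cast (R := ℝ))
        (Nat.choose_mul_factorial_mul_factorial hjle)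
    rw [nsmul_eq_mul, mul_div_assoc']
    rw [hfac]
    rw [Nat.factorial_succ]
    have h1 : (Nat.factorial s.card : ℝ) ≠ 0 := by positivity
    push_cast
    field_simp
  rw [Finset.sum_congr rfl h, Finset.sum_const, Finset.card_range, nsmul_eq_mul]
  field_simp
  exact Nat.cast_succ _

/-- By superadditivity, the Shapley value of a member is at least its stand-alone value. -/
lemma shapley_ge (v : Finset α → ℝ)
    (hsa : ∀ B C : Finset α, Disjoint B C → v B + v C ≤ v (B ∪ C))
    (M : Finset α) (i : α) (hi : i ∈ M) :
    v {i} ≤ shapleyOn M v i := by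
  have hM1 : 1 ≤ M.card := Finset.card_pos.mpr ⟨i, hi⟩
  have hcard : M.card = (M.erase i).card + 1 := by
    rw [Finset.card_erase_of_mem hi]; omega
  have hw : ∀ C : Finset α,
      ((Nat.factorial C.card * Nat.factorial (M.card - C.card - 1) : ℝ) /
        (Nat.factorial M.card : ℝ))
      = ((Nat.factorial C.card * Nat.factorial ((M.erase i).card - C.card) : ℝ) /
        (Nat.factorial ((M.erase i).card + 1) : ℝ)) := by
    intro C
    rw [hcard]
    have h2 : (M.erase i).card + 1 - C.card - 1 = (M.erase i).card - C.card := by omega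
    rw [h2]
  calc v {i}
      = v {i} * ∑ C ∈ (M.erase i).powerset,
          ((Nat.factorial C.card * Nat.factorial ((M.erase i).card - C.card) : ℝ) /
            (Nat.factorial ((M.erase i).card + 1) : ℝ)) := by
        rw [shapley_weight_sum, mul_one]
    _ = ∑ C ∈ (M.erase i).powerset,
          ((Nat.factorial C.card * Nat.factorial (M.card - C.card - 1) : ℝ) /
            (Nat.factorial M.card : ℝ)) * v {i} := by
        rw [Finset.mul_sum]
        exact Finset.sum_congr rfl fun C _ => by rw [hw C, mul_comm]
    _ ≤ shapleyOn M v i := by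
        unfold shapleyOn
        apply Finset.sum_le_sum
        intro C hC
        have hiC : i ∉ C := fun h =>
          Finset.notMem_erase i M ((Finset.mem_powerset.mp hC) h)
        have hdisj : Disjoint ({i} : Finset α) C :=
          Finset.disjoint_singleton_left.mpr hiC
        have hsai := hsa {i} C hdisj
        have hins : ({i} : Finset α) ∪ C = insert i C := by
          ext x; simp [or_comm]
        rw [hins] at hsai
        have hwnn : 0 ≤ ((Nat.factorial C.card * Nat.factorial (M.card - C.card - 1) : ℝ) /
            (Nat.factorial M.card : ℝ)) := by positivity
        apply mul_le_mul_of_nonneg_left _ hwnn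
        linarith

lemma phi_ge [Fintype α] (v : Finset α → ℝ)
    (hsa : ∀ B C : Finset α, Disjoint B C → v B + v C ≤ v (B ∪ C))
    (t : α → ℕ) (i : α) (τ : ℕ) : v {i} ≤ phiTime v t i τ := by
  unfold phiTime
  split_ifs with h
  · exact shapley_ge v hsa _ i (by simp [h])
  · exact le_refl _

lemma denom_pos {β : ℝ} (hβ : 0 < β) (n : ℕ) :
    0 < ∑ s ∈ Finset.range (n + 1), β ^ s :=
  Finset.sum_pos (fun s _ => pow_pos hβ s) Finset.nonempty_range_add_one

lemma lastWeight_antitone {β : ℝ} (hβ : 0 < β) :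
    Antitone (fun n => β ^ n / ∑ s ∈ Finset.range (n + 1), β ^ s) := by
  apply antitone_nat_of_succ_le
  intro n
  have hS : 0 < ∑ s ∈ Finset.range (n + 1), β ^ s := denom_pos hβ n
  have hS' : 0 < ∑ s ∈ Finset.range (n + 2), β ^ s := denom_pos hβ (n + 1)
  rw [div_le_div_iff₀ hS' hS]
  have hmul : β * ∑ s ∈ Finset.range (n + 1), β ^ s
      = ∑ s ∈ Finset.range (n + 1), β ^ (s + 1) := by
    rw [Finset.mul_sum]
    exact Finset.sum_congr rfl fun s _ => by ring
  have hsplit : ∑ s ∈ Finset.range (n + 2), β ^ s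
      = ∑ s ∈ Finset.range (n + 1), β ^ (s + 1) + β ^ 0 :=
    Finset.sum_range_succ' (fun s => β ^ s) (n + 1)
  have h1 : β * ∑ s ∈ Finset.range (n + 1), β ^ s ≤ ∑ s ∈ Finset.range (n + 2), β ^ s := by
    rw [hmul, hsplit]; norm_num
  calc β ^ (n + 1) * ∑ s ∈ Finset.range (n + 1), β ^ s
      = β ^ n * (β * ∑ s ∈ Finset.range (n + 1), β ^ s) := by ring
    _ ≤ β ^ n * ∑ s ∈ Finset.range (n + 2), β ^ s :=
        mul_le_mul_of_nonneg_left h1 (le_of_lt (pow_pos hβ n))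

lemma weight_sum {β : ℝ} (hβ : 0 < β) (n : ℕ) :
    ∑ τ ∈ Finset.range (n + 1), β ^ τ / (∑ s ∈ Finset.range (n + 1), β ^ s) = 1 := by
  rw [← Finset.sum_div, div_self (denom_pos hβ n).ne']

theorem reward_time_monotonicity [Fintype α] (v : Finset α → ℝ) (t t' : α → ℕ)
    (β : ℝ) (hβ : 0 < β)
    (hv0 : v ∅ = 0)
    (hnn : ∀ C : Finset α, 0 ≤ v C)
    (hsa : ∀ B C : Finset α, Disjoint B C → v B + v C ≤ v (B ∪ C))
    (i : α) (hti : t' i < t i) (htj : ∀ j : α, j ≠ i → t' j = t j) :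
    reward v t β i ≤ reward v t' β i := by
  set T := Finset.univ.sup t with hTdef
  set T' := Finset.univ.sup t' with hT'def
  have hle : ∀ j, t' j ≤ t j := by
    intro j
    by_cases h : j = i
    · subst h; exact le_of_lt hti
    · rw [htj j h]
  have hTT : T' ≤ T := Finset.sup_mono_fun (fun j _ => hle j)
  have hphi_mono : ∀ τ : ℕ, phiTime v t i τ ≤ phiTime v t' i τ := by
    intro τ
    unfold phiTime
    by_cases h1 : t i ≤ τ
    · have h2 : t' i ≤ τ := le_trans (le_of_lt hti) h1
      rw [if_pos h1, if_pos h2]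
      have hset : Finset.univ.filter (fun k => t k ≤ τ)
          = Finset.univ.filter (fun k => t' k ≤ τ) := by
        ext k
        simp only [Finset.mem_filter, Finset.mem_univ, true_and]
        by_cases hk : k = i
        · subst hk; exact ⟨fun _ => h2, fun _ => h1⟩
        · rw [htj k hk]
      rw [hset]
    · rw [if_neg h1]
      by_cases h2 : t' i ≤ τ
      · rw [if_pos h2]
        exact shapley_ge v hsa _ i (by simp [h2])
      · rw [if_neg h2]
  rcases eq_or_lt_of_le hTT with heq | hlt
  · -- same horizon: pointwise comparison
    unfold reward
    rw [← hTdef, ← hT'def, heq]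
    apply Finset.sum_le_sum
    intro τ _
    have hwnn : 0 ≤ β ^ τ / ∑ s ∈ Finset.range (T + 1), β ^ s := by
      have := denom_pos hβ T
      positivity
    exact mul_le_mul_of_nonneg_left (hphi_mono τ) hwnn
  · -- horizon shrinks: `i` held the unique maximum
    have htiT : t i = T := by
      obtain ⟨k, _, hk⟩ := Finset.exists_mem_eq_sup Finset.univ
        ⟨i, Finset.mem_univ i⟩ t
      by_cases hki : k = i
      · subst hki; exact hk.symm
      · exfalso
        have hTk : T = t k := hk
        have : T ≤ T' := by
          rw [hTk, ← htj k hki]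
          exact Finset.le_sup (Finset.mem_univ k)
        omega
    set S := ∑ s ∈ Finset.range (T + 1), β ^ s with hSdef
    set S' := ∑ s ∈ Finset.range (T' + 1), β ^ s with hS'def
    have hSpos : 0 < S := denom_pos hβ T
    have hS'pos : 0 < S' := denom_pos hβ T'
    set Φ := shapleyOn (Finset.univ : Finset α) v i with hΦdef
    have hΦge : v {i} ≤ Φ := shapley_ge v hsa _ i (Finset.mem_univ i)
    set w : ℝ := β ^ T / S with hwdef
    set w' : ℝ := β ^ T' / S' with hw'def
    have hww : w ≤ w' := lastWeight_antitone hβ hTT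
    -- reward under t
    have hreward : reward v t β i = (1 - w) * v {i} + w * Φ := by
      unfold reward
      rw [← hTdef, ← hSdef, Finset.sum_range_succ]
      have hlast : phiTime v t i T = Φ := by
        unfold phiTime
        rw [if_pos (le_of_eq htiT)]
        congr 1
        rw [Finset.filter_true_of_mem]
        intro k _
        exact Finset.le_sup (Finset.mem_univ k)
      have hinit : ∀ τ ∈ Finset.range T, (β ^ τ / S) * phiTime v t i τ
          = (β ^ τ / S) * v {i} := by
        intro τ hτ
        rw [Finset.mem_range] at hτ
        unfold phiTime
        rw [if_neg (by omega)]
      rw [hlast, Finset.sum_congr rfl hinit, ← Finset.sum_mul]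
      have hsum1 : (∑ τ ∈ Finset.range T, β ^ τ / S) = 1 - w := by
        have := weight_sum hβ T
        rw [← hSdef] at this
        rw [Finset.sum_range_succ] at this
        rw [hwdef]; linarith
      rw [hsum1]
    rw [hreward]
    -- lower bound for reward under t'
    have hreward' : (1 - w') * v {i} + w' * Φ ≤ reward v t' β i := by
      unfold reward
      rw [← hT'def, ← hS'def, Finset.sum_range_succ]
      have hlast : phiTime v t' i T' = Φ := by
        unfold phiTime
        rw [if_pos (Finset.le_sup (Finset.mem_univ i))]
        congr 1
        rw [Finset.filter_true_of_mem]
        intro k _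
        exact Finset.le_sup (Finset.mem_univ k)
      rw [hlast]
      have hsum1 : (∑ τ ∈ Finset.range T', β ^ τ / S') = 1 - w' := by
        have := weight_sum hβ T'
        rw [← hS'def] at this
        rw [Finset.sum_range_succ] at this
        rw [hw'def]; linarith
      have hinit : (1 - w') * v {i} = ∑ τ ∈ Finset.range T', (β ^ τ / S') * v {i} := by
        rw [← Finset.sum_mul, hsum1]
      rw [hinit]
      apply add_le_add_left
      apply Finset.sum_le_sum
      intro τ _
      have hwnn : 0 ≤ β ^ τ / S' := by positivity
      exact mul_le_mul_of_nonneg_left (phi_ge v hsa t' i τ) hwnn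
    refine le_trans ?_ hreward'
    nlinarith [hΦge, hww]
end

section
/- The weighted valuation function v_λ admits the level-decomposition identity: v_λ(C) = Σ_{h=0}^{r−1} (y_{h+1} − y_h) v(C ∩ N_{h+1}) + Σ_{i ∈ C} (1 − λ_i) v({i}), where v_λ(C) = Σ_{T ⊆ C, |T| ≥ 2} d(v,T) min_{i∈T} λ_i + Σ_{i∈C} d(v,{i}), the y_h are 0 = y_0 < y_1 < ... < y_r enumerating the distinct values in {λ_i}, and N_{h+1} = {i ∈ N : λ_i ≥ y_{h+1}}. -/
open Finset

variable {α : Type*} [DecidableEq α]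

/-- Harsanyi dividend: `d(v, T) = v(T) − Σ_{S ⊊ T} d(v, S)`. -/
noncomputable def dividend (v : Finset α → ℝ) (T : Finset α) : ℝ :=
  v T - ∑ S ∈ (T.powerset.erase T).attach, dividend v S.1
termination_by T.card
decreasing_by
  have hS := Finset.mem_erase.mp S.2
  rw [Finset.mem_powerset] at hS
  exact Finset.card_lt_card (Finset.ssubset_iff_subset_ne.mpr ⟨hS.2, hS.1⟩)

lemma sum_dividend (v : Finset α → ℝ) (T : Finset α) :
    ∑ S ∈ T.powerset, dividend v S = v T := by
  rw [← Finset.add_sum_erase _ _ (Finset.mem_powerset_self T), dividend,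
    Finset.sum_attach]
  ring

lemma dividend_empty (v : Finset α → ℝ) (hv0 : v ∅ = 0) : dividend v ∅ = 0 := by
  have := sum_dividend v (∅ : Finset α)
  simpa [hv0] using this

lemma dividend_singleton (v : Finset α → ℝ) (hv0 : v ∅ = 0) (i : α) :
    dividend v ({i} : Finset α) = v {i} := by
  have h := sum_dividend v ({i} : Finset α)
  rw [show ({i} : Finset α).powerset = {∅, {i}} by
    ext S; simp [Finset.subset_singleton_iff]] at h
  rw [Finset.sum_pair ((Finset.singleton_ne_empty i).symm)] at h
  rw [dividend_empty v hv0] at h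
  linarith

theorem weighted_valuation_level_decomposition {α : Type*} [Fintype α] [DecidableEq α]
    (v : Finset α → ℝ) (hv0 : v ∅ = 0)
    (lam : α → ℝ) (hlam : ∀ i : α, 0 < lam i ∧ lam i ≤ 1)
    (r : ℕ) (y : ℕ → ℝ) (hy0 : y 0 = 0)
    (hymono : ∀ h < r, y h < y (h + 1))
    (himg : Finset.univ.image lam = (Finset.Icc 1 r).image y)
    (C : Finset α) :
    (∑ T ∈ C.powerset.filter (fun T => 2 ≤ T.card), dividend v T * sInf (lam '' ↑T)) +
      ∑ i ∈ C, dividend v ({i} : Finset α) =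
    (∑ h ∈ Finset.range r, (y (h + 1) - y h) *
        v (C ∩ Finset.univ.filter (fun k => y (h + 1) ≤ lam k))) +
      ∑ i ∈ C, (1 - lam i) * v ({i} : Finset α) := by
  -- monotonicity of y on [0, r]
  have ymono : ∀ a b : ℕ, a ≤ b → b ≤ r → y a ≤ y b := by
    intro a b hab hbr
    induction b with
    | zero => interval_cases a; rfl
    | succ n ih =>
      rcases Nat.eq_or_lt_of_le hab with h | h
      · rw [h]
      · exact le_trans (ih (by omega) (by omega)) (le_of_lt (hymono n (by omega)))
  -- each lam i equals some y k, 1 ≤ k ≤ r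
  have hk : ∀ i : α, ∃ k, 1 ≤ k ∧ k ≤ r ∧ lam i = y k := by
    intro i
    have hmem : lam i ∈ Finset.univ.image lam :=
      Finset.mem_image_of_mem _ (Finset.mem_univ i)
    rw [himg] at hmem
    obtain ⟨k, hkm, he⟩ := Finset.mem_image.mp hmem
    rw [Finset.mem_Icc] at hkm
    exact ⟨k, hkm.1, hkm.2, he.symm⟩
  -- infimum of lam over a nonempty finset is attained
  have hmin : ∀ T : Finset α, T.Nonempty →
      ∃ i0 ∈ T, sInf (lam '' ↑T) = lam i0 ∧ ∀ j ∈ T, lam i0 ≤ lam j := by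
    intro T hT
    have hne : (T.image lam).Nonempty := hT.image lam
    have h1 : sInf (lam '' ↑T) = (T.image lam).min' hne := by
      rw [← Finset.coe_image]
      exact Finset.Nonempty.csInf_eq_min' hne
    obtain ⟨i0, hi0, he⟩ := Finset.mem_image.mp ((T.image lam).min'_mem hne)
    refine ⟨i0, hi0, by rw [h1, he], fun j hj => ?_⟩
    rw [he]
    exact Finset.min'_le _ _ (Finset.mem_image_of_mem _ hj)
  -- telescoping sum
  have tele : ∀ k, 1 ≤ k → k ≤ r →
      ∑ h ∈ Finset.range r, (if y (h+1) ≤ y k then y (h+1) - y h else 0) = y k := by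
    intro k hk1 hkr
    rw [← Finset.sum_filter]
    have hfil : (Finset.range r).filter (fun h => y (h+1) ≤ y k) = Finset.range k := by
      ext h
      simp only [Finset.mem_filter, Finset.mem_range]
      constructor
      · rintro ⟨hr', hle⟩
        by_contra hc
        push_neg at hc
        have h1 : y k ≤ y h := ymono k h (by omega) (by omega)
        have h2 := hymono h hr'
        linarith
      · intro hlt
        exact ⟨by omega, ymono (h+1) k (by omega) hkr⟩
    rw [hfil, Finset.sum_range_sub (fun h => y h), hy0]
    ring
  -- Step 1: each level term as a sum over subsets of C
  have step1 : ∀ h ∈ Finset.range r,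
      (y (h+1) - y h) * v (C ∩ Finset.univ.filter (fun k => y (h+1) ≤ lam k))
      = ∑ S ∈ C.powerset,
          (if ∀ i ∈ S, y (h+1) ≤ lam i then (y (h+1) - y h) * dividend v S else 0) := by
    intro h _
    rw [← sum_dividend v (C ∩ Finset.univ.filter (fun k => y (h+1) ≤ lam k)),
      Finset.mul_sum]
    have hpow : (C ∩ Finset.univ.filter (fun k => y (h+1) ≤ lam k)).powerset
        = C.powerset.filter (fun S => ∀ i ∈ S, y (h+1) ≤ lam i) := by
      ext S
      simp only [Finset.mem_powerset, Finset.subset_iff, Finset.mem_inter,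
        Finset.mem_filter, Finset.mem_univ, true_and]
      constructor
      · intro hsub
        exact ⟨fun x hx => (hsub hx).1, fun i hi => (hsub hi).2⟩
      · rintro ⟨h1, h2⟩ x hx
        exact ⟨h1 hx, h2 x hx⟩
    rw [hpow, Finset.sum_filter]
  have key : ∑ h ∈ Finset.range r, (y (h + 1) - y h) *
        v (C ∩ Finset.univ.filter (fun k => y (h + 1) ≤ lam k))
      = ∑ S ∈ C.powerset, dividend v S *
          (if hS : S.Nonempty then sInf (lam '' ↑S) else 0) := by
    rw [Finset.sum_congr rfl step1, Finset.sum_comm]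
    refine Finset.sum_congr rfl fun S hS => ?_
    by_cases hne : S.Nonempty
    · obtain ⟨i0, hi0, hinf, hlb⟩ := hmin S hne
      obtain ⟨k, hk1, hkr, hik⟩ := hk i0
      rw [dif_pos hne, hinf, hik, ← tele k hk1 hkr, Finset.mul_sum]
      refine Finset.sum_congr rfl fun h _ => ?_
      have hiff : (∀ i ∈ S, y (h+1) ≤ lam i) ↔ y (h+1) ≤ y k := by
        constructor
        · intro hall; rw [← hik]; exact hall i0 hi0
        · intro hle i hi
          exact le_trans (hik ▸ hle) (hlb i hi)
      by_cases hc : y (h+1) ≤ y k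
      · rw [if_pos (hiff.mpr hc), if_pos hc]; ring
      · rw [if_neg (fun hh => hc (hiff.mp hh)), if_neg hc]; ring
    · rw [Finset.not_nonempty_iff_eq_empty] at hne
      subst hne
      simp [dividend_empty v hv0]
  have split : ∑ S ∈ C.powerset, dividend v S *
        (if hS : S.Nonempty then sInf (lam '' ↑S) else 0)
      = (∑ T ∈ C.powerset.filter (fun T => 2 ≤ T.card), dividend v T * sInf (lam '' ↑T))
        + ∑ i ∈ C, dividend v ({i} : Finset α) * lam i := by
    rw [← Finset.sum_filter_add_sum_filter_not C.powerset (fun S => 2 ≤ S.card)]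
    congr 1
    · refine Finset.sum_congr rfl fun S hS => ?_
      have hne : S.Nonempty := Finset.card_pos.mp
        (by have := (Finset.mem_filter.mp hS).2; omega)
      rw [dif_pos hne]
    · have hfe : C.powerset.filter (fun S => ¬ 2 ≤ S.card)
          = insert ∅ (C.powerset.filter (fun S => S.card = 1)) := by
        ext S
        simp only [Finset.mem_filter, Finset.mem_powerset, Finset.mem_insert]
        constructor
        · rintro ⟨hsub, hcard⟩
          rcases Nat.le_one_iff_eq_zero_or_eq_one.mp (show S.card ≤ 1 by omega) with h0 | h1
          · exact Or.inl (Finset.card_eq_zero.mp h0)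
          · exact Or.inr ⟨hsub, h1⟩
        · rintro (rfl | ⟨hsub, h1⟩)
          · exact ⟨Finset.empty_subset C, by simp⟩
          · exact ⟨hsub, by omega⟩
      rw [hfe, Finset.sum_insert (by simp), dividend_empty v hv0, zero_mul, zero_add,
        ← Finset.powersetCard_eq_filter, Finset.powersetCard_one, Finset.sum_map]
      refine Finset.sum_congr rfl fun i hi => ?_
      simp only [Function.Embedding.coeFn_mk]
      rw [dif_pos (Finset.singleton_nonempty i)]
      congr 1
      rw [Finset.coe_singleton, Set.image_singleton, csInf_singleton]
  rw [key, split]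
  have hsing : ∀ i ∈ C, (1 - lam i) * v ({i} : Finset α)
      = (1 - lam i) * dividend v ({i} : Finset α) := by
    intro i _; rw [dividend_singleton v hv0]
  rw [Finset.sum_congr rfl hsing, add_assoc, ← Finset.sum_add_distrib]
  congr 1
  refine Finset.sum_congr rfl fun i _ => ?_
  ring
end

section
/- If v is non-negative (respectively, monotone) on 2^N, then the weighted valuation function v_λ(C) = Σ_{h=0}^{r−1} (y_{h+1} − y_h) v(C ∩ N_{h+1}) + Σ_{i ∈ C} (1 − λ_i) v({i}) is non-negative (respectively, monotone) on 2^N, for any cooperation levels λ ∈ (0,1]^N. -/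
open Finset

/-- The weighted valuation function in its level-decomposition form. -/
noncomputable def wval {α : Type*} [Fintype α] [DecidableEq α]
    (v : Finset α → ℝ) (lam : α → ℝ) (r : ℕ) (y : ℕ → ℝ) (C : Finset α) : ℝ :=
  (∑ h ∈ Finset.range r, (y (h + 1) - y h) *
      v (C ∩ Finset.univ.filter (fun k => y (h + 1) ≤ lam k))) +
    ∑ i ∈ C, (1 - lam i) * v ({i} : Finset α)

theorem weighted_valuation_nonneg_monotone {α : Type*} [Fintype α] [DecidableEq α]
    (v : Finset α → ℝ) (hv0 : v ∅ = 0)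
    (lam : α → ℝ) (hlam : ∀ i : α, 0 < lam i ∧ lam i ≤ 1)
    (r : ℕ) (y : ℕ → ℝ) (hy0 : y 0 = 0)
    (hymono : ∀ h < r, y h < y (h + 1))
    (himg : Finset.univ.image lam = (Finset.Icc 1 r).image y) :
    ((∀ C : Finset α, 0 ≤ v C) → ∀ C : Finset α, 0 ≤ wval v lam r y C) ∧
    ((∀ B C : Finset α, B ⊆ C → v B ≤ v C) →
      ∀ B C : Finset α, B ⊆ C → wval v lam r y B ≤ wval v lam r y C) := by
  have hydiff : ∀ h ∈ Finset.range r, 0 ≤ y (h + 1) - y h := by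
    intro h hh
    exact le_of_lt (sub_pos.mpr (hymono h (Finset.mem_range.mp hh)))
  have hlam1 : ∀ i : α, 0 ≤ 1 - lam i := fun i => sub_nonneg.mpr (hlam i).2
  constructor
  · intro hv C
    unfold wval
    apply add_nonneg
    · exact Finset.sum_nonneg fun h hh => mul_nonneg (hydiff h hh) (hv _)
    · exact Finset.sum_nonneg fun i _ => mul_nonneg (hlam1 i) (hv _)
  · intro hmono B C hBC
    unfold wval
    apply add_le_add
    · apply Finset.sum_le_sum
      intro h hh
      exact mul_le_mul_of_nonneg_left
        (hmono _ _ (Finset.inter_subset_inter_right hBC)) (hydiff h hh)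
    · apply Finset.sum_le_sum_of_subset_of_nonneg hBC
      intro i _ _
      exact mul_nonneg (hlam1 i) (hv0 ▸ hmono ∅ {i} (Finset.empty_subset _))
end
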